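/- arXiv:1003.3373 — 2 statements merged into one kernel-verified Lean document; each statement's English description precedes it below -/
import Mathlib

section
/- If (x_0, ν_0, η_0) is an invariant state of the fluid equations with arrival rate λ ∈ (0,∞), then η_0(dx) = λ(1-G^r(x))dx on [0,H^r), i.e., η_0 = λη*. -/
open Set MeasureTheory Filter Topology

open scoped NNReal ENNReal BoundedContinuousFunction

/-!
Write `S = 1 - G` for the survival function. Letting `t → ∞` in the invariance identity, the
first term on the right is the mass of `η₀` transported to ages `≥ t`, weighted by the
conditional survival probabilities `S (x + t) / S x ≤ 1`; since `S` is antitone and integrable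
it tends to `0`, so by dominated convergence this term vanishes in the limit. Hence
`∫ f dη₀ = λ ∫_0^∞ f S` for every bounded continuous `f`, and bounded continuous functions
determine a finite measure on `ℝ`.
-/

theorem Antitone.tendsto_atTop_zero_of_integrableOn {S : ℝ → ℝ} {a : ℝ} (hS : Antitone S)
    (hS_nonneg : ∀ x, 0 ≤ S x) (hS_int : IntegrableOn S (Ioi a)) :
    Tendsto S atTop (𝓝 0) := by
  have hbdd : BddBelow (range S) := ⟨0, by rintro _ ⟨x, rfl⟩; exact hS_nonneg x⟩
  have hinf_nonneg : 0 ≤ ⨅ x, S x := le_ciInf hS_nonneg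
  suffices hinf : ⨅ x, S x = 0 from hinf ▸ tendsto_atTop_ciInf hS hbdd
  have hconst : IntegrableOn (fun _ ↦ ⨅ x, S x) (Ioi a) :=
    hS_int.mono' aestronglyMeasurable_const <| .of_forall fun x ↦ by
      rw [Real.norm_of_nonneg hinf_nonneg]; exact ciInf_le hbdd x
  rcases (integrableOn_const_iff).mp hconst with h | h
  · exact enorm_eq_zero.mp h
  · simp [Real.volume_Ioi] at h

theorem tendsto_integral_comp_add_mul_div_atTop {η : Measure ℝ} [IsFiniteMeasure η]
    {S f : ℝ → ℝ} {M : ℝ} (hS : Antitone S) (hS_nonneg : ∀ x, 0 ≤ S x)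
    (hS_lim : Tendsto S atTop (𝓝 0)) (hf : Measurable f) (hM : ∀ x, |f x| ≤ M) :
    Tendsto (fun t ↦ ∫ x, f (x + t) * (S (x + t) / S x) ∂η) atTop (𝓝 0) := by
  have hratio : ∀ x {t : ℝ}, 0 ≤ t → 0 ≤ S (x + t) / S x ∧ S (x + t) / S x ≤ 1 :=
    fun x t ht ↦ ⟨div_nonneg (hS_nonneg _) (hS_nonneg x),
      div_le_one_of_le₀ (hS (le_add_of_nonneg_right ht)) (hS_nonneg x)⟩
  have hbound : ∀ x {t : ℝ}, 0 ≤ t →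
      ‖f (x + t) * (S (x + t) / S x)‖ ≤ M * (S (x + t) / S x) := fun x t ht ↦ by
    rw [norm_mul, Real.norm_eq_abs, Real.norm_of_nonneg (hratio x ht).1]
    exact mul_le_mul_of_nonneg_right (hM _) (hratio x ht).1
  have hS_meas : Measurable S := hS.measurable
  rw [← integral_zero ℝ ℝ]
  refine tendsto_integral_filter_of_dominated_convergence (fun _ ↦ M)
    (.of_forall fun t ↦ ?_) ?_ (integrable_const M) (.of_forall fun x ↦ ?_)
  · fun_prop
  · filter_upwards [eventually_ge_atTop 0] with t ht
    refine .of_forall fun x ↦ (hbound x ht).trans ?_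
    exact mul_le_of_le_one_right ((abs_nonneg _).trans (hM 0)) (hratio x ht).2
  · -- if `S x = 0` the ratio is `S (x + t) / 0 = 0` for all `t`
    have hlim : Tendsto (fun t ↦ S (x + t) / S x) atTop (𝓝 0) := by
      simpa using (hS_lim.comp (tendsto_atTop_add_const_left _ x tendsto_id)).div_const (S x)
    refine squeeze_zero_norm' ?_ (by simpa using hlim.const_mul M)
    filter_upwards [eventually_ge_atTop 0] with t ht using hbound x ht

/-- The invariance identity for the age measure `η` of a fluid-model state with survival
function `S = 1 - G^r` and arrival rate `lam`. -/
def IsInvariantAgeMeasure (S : ℝ → ℝ) (lam : ℝ) (η : Measure ℝ) : Prop :=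
  ∀ f : ℝ → ℝ, Continuous f → (∃ M, ∀ x, |f x| ≤ M) → ∀ t : ℝ, 0 ≤ t →
    ∫ x, f x ∂η = ∫ x, f (x + t) * (S (x + t) / S x) ∂η + lam * ∫ s in (0 : ℝ)..t, f s * S s

theorem IsInvariantAgeMeasure.integral_eq {S : ℝ → ℝ} {lam : ℝ} {η : Measure ℝ}
    [IsFiniteMeasure η] (hη : IsInvariantAgeMeasure S lam η) (hS : Antitone S)
    (hS_nonneg : ∀ x, 0 ≤ S x) (hS_int : IntegrableOn S (Ioi 0)) {f : ℝ → ℝ} {M : ℝ}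
    (hf : Continuous f) (hM : ∀ x, |f x| ≤ M) :
    ∫ x, f x ∂η = lam * ∫ x in Ioi 0, f x * S x := by
  have hfS : IntegrableOn (fun x ↦ f x * S x) (Ioi 0) :=
    hS_int.bdd_mul hf.aestronglyMeasurable (.of_forall hM)
  have hlim := (tendsto_integral_comp_add_mul_div_atTop (η := η) hS hS_nonneg
    (hS.tendsto_atTop_zero_of_integrableOn hS_nonneg hS_int) hf.measurable hM).add
    ((intervalIntegral_tendsto_integral_Ioi 0 hfS tendsto_id).const_mul lam)
  rw [zero_add] at hlim
  refine tendsto_nhds_unique (tendsto_const_nhds.congr' ?_) hlim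
  filter_upwards [eventually_ge_atTop 0] with t ht using hη f hf ⟨M, hM⟩ t ht

theorem eq_withDensity_ofReal_of_forall_integral_eq {X : Type*} [MeasurableSpace X]
    [TopologicalSpace X] [HasOuterApproxClosed X] [BorelSpace X] {μ ν : Measure X}
    [IsFiniteMeasure μ] {ρ : X → ℝ} (hρ : Integrable ρ ν) (hρ_nonneg : 0 ≤ᵐ[ν] ρ)
    (h : ∀ f : X →ᵇ ℝ≥0, ∫ x, (f x : ℝ) ∂μ = ∫ x, (f x : ℝ) * ρ x ∂ν) :
    μ = ν.withDensity fun x ↦ ENNReal.ofReal (ρ x) := by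
  refine ext_of_forall_lintegral_eq_of_IsFiniteMeasure fun f ↦ ?_
  have hfρ : Integrable (fun x ↦ (f x : ℝ) * ρ x) ν :=
    hρ.bdd_mul (by fun_prop) (.of_forall fun x ↦ by
      simpa [← NNReal.coe_le_coe] using f.apply_le_nndist_zero x)
  rw [lintegral_coe_eq_integral _ (f.integrable_of_nnreal μ), h,
    ofReal_integral_eq_lintegral_ofReal hfρ
      (hρ_nonneg.mono fun x hx ↦ mul_nonneg (f x).coe_nonneg hx),
    lintegral_withDensity_eq_lintegral_mul₀ hρ.aemeasurable.ennreal_ofReal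
      f.measurable_coe_ennreal_comp.aemeasurable]
  refine lintegral_congr fun x ↦ ?_
  rw [ENNReal.ofReal_mul (f x).coe_nonneg, ENNReal.ofReal_coe_nnreal, Pi.mul_apply, mul_comm]

theorem stmt9_general (G : ℝ → ℝ) (lam : ℝ) (η0 : Measure ℝ) [IsFiniteMeasure η0]
    (hlam : 0 < lam)
    (hGmono : Monotone G)
    (hG1 : ∀ x, G x ≤ 1)
    (hmean : IntegrableOn (fun x => 1 - G x) (Ioi 0))
    (hinv : ∀ f : ℝ → ℝ, Continuous f → (∃ M, ∀ x, |f x| ≤ M) → ∀ t : ℝ, 0 ≤ t →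
      (∫ x, f x ∂η0)
        = (∫ x, f (x + t) * ((1 - G (x + t)) / (1 - G x)) ∂η0)
          + lam * ∫ s in (0:ℝ)..t, f s * (1 - G s)) :
    η0 = (volume.restrict (Ioi 0)).withDensity
      (fun x => ENNReal.ofReal (lam * (1 - G x))) := by
  have hS : Antitone fun x ↦ 1 - G x := fun _ _ h ↦ sub_le_sub_left (hGmono h) 1
  have hS_nonneg : ∀ x, 0 ≤ 1 - G x := fun x ↦ sub_nonneg.mpr (hG1 x)
  refine eq_withDensity_ofReal_of_forall_integral_eq (hmean.const_mul lam)
    (.of_forall fun x ↦ mul_nonneg hlam.le (hS_nonneg x)) fun f ↦ ?_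
  obtain ⟨M, hM⟩ : ∃ M, ∀ x, |(f x : ℝ)| ≤ M :=
    ⟨dist 0 f, fun x ↦ by simpa [← NNReal.coe_le_coe] using f.apply_le_nndist_zero x⟩
  rw [IsInvariantAgeMeasure.integral_eq (S := fun x ↦ 1 - G x) hinv hS hS_nonneg hmean
    (by fun_prop) hM, ← integral_const_mul]
  exact setIntegral_congr_fun measurableSet_Ioi fun x _ ↦ by ring

/-- If `(x₀, ν₀, η₀)` is an invariant state of the fluid equations with arrival rate
`λ ∈ (0,∞)`, then `η₀(dx) = λ (1 - G^r(x)) dx`, i.e. `η₀ = λ η*`.  Following the paper, we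
formalize: if a finite measure `η₀` on `[0,H^r)` (where `H^r = sup{x : G^r(x) < 1}`)
satisfies, for every bounded continuous `f` and every `t ≥ 0`,
`∫ f dη₀ = ∫ f(x+t) (1-G^r(x+t))/(1-G^r(x)) η₀(dx) + λ ∫_0^t f(s)(1-G^r(s)) ds`,
where `G^r` is a continuous CDF with density and finite mean, then
`η₀(dx) = λ (1-G^r(x)) dx`. -/
theorem stmt9 (G g : ℝ → ℝ) (lam : ℝ) (η0 : Measure ℝ) [IsFiniteMeasure η0]
    (hlam : 0 < lam)
    (hGcont : Continuous G) (hGmono : Monotone G)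
    (hG0 : G 0 = 0) (hG1 : ∀ x, G x ≤ 1)
    (hgnn : ∀ x, 0 ≤ g x)
    (hdens : ∀ x, G x = ∫ y in (0:ℝ)..x, g y)
    (hmean : IntegrableOn (fun x => 1 - G x) (Ioi 0))
    (hsupp0 : η0 (Iio 0) = 0) (hsuppH : η0 {x : ℝ | 1 ≤ G x} = 0)
    (hinv : ∀ f : ℝ → ℝ, Continuous f → (∃ M, ∀ x, |f x| ≤ M) → ∀ t : ℝ, 0 ≤ t →
      (∫ x, f x ∂η0)
        = (∫ x, f (x + t) * ((1 - G (x + t)) / (1 - G x)) ∂η0)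
          + lam * ∫ s in (0:ℝ)..t, f s * (1 - G s)) :
    η0 = (volume.restrict (Ioi 0)).withDensity
      (fun x => ENNReal.ofReal (lam * (1 - G x))) :=
  stmt9_general G lam η0 hlam hGmono hG1 hmean hinv
end

section
/- Let G be a CDF on [0,∞) with density and finite mean, H = sup{x: G(x)<1}, and let μ be a finite measure on [0,H) such that for every bounded continuous f and t ≥ 0: ∫ f dμ = ∫ f(x+t)((1-G(x+t))/(1-G(x))) μ(dx) + κ ∫_0^t f(s)(1-G(s)) ds, for some constant κ ≥ 0. Then μ(dx) = κ(1-G(x))dx. -/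
open Set MeasureTheory Filter Topology
open scoped BoundedContinuousFunction

/-!
Let `t → ∞` in the invariance identity. The survival ratio `(1 - G (x + t)) / (1 - G x)` lies
in `[0, 1]` and tends to `0` for every `x` (when `G x = 1` it is `0` already, by `a / 0 = 0`),
because integrability of `1 - G` forces `G → 1`. By dominated convergence the first term
vanishes and the second tends to `κ ∫_0^∞ f (1 - G)`, so `μ` and `κ (1 - G(x)) dx` have the
same integral against every bounded continuous `f`; two finite measures with this property
coincide.
-/

theorem tendsto_atTop_zero_of_antitone_of_integrableOn_Ioi {f : ℝ → ℝ} {a : ℝ}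
    (hanti : Antitone f) (hnn : ∀ x, 0 ≤ f x) (hint : IntegrableOn f (Ioi a)) :
    Tendsto f atTop (𝓝 0) := by
  have hbdd : BddBelow (range f) := ⟨0, by rintro _ ⟨x, rfl⟩; exact hnn x⟩
  suffices hinf : ⨅ x, f x = 0 by simpa [hinf] using tendsto_atTop_ciInf hanti hbdd
  by_contra hne
  have hpos : 0 < ⨅ x, f x := (le_ciInf hnn).lt_of_ne' hne
  have hfin := Integrable.measure_ge_lt_top hint hpos
  have huniv : {x | ⨅ y, f y ≤ f x} = univ := eq_univ_of_forall fun x => ciInf_le hbdd x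
  rw [huniv] at hfin
  simp [Real.volume_Ioi] at hfin

theorem survival_ratio_mem_Icc {G : ℝ → ℝ} (hmono : Monotone G) (hG1 : ∀ x, G x ≤ 1)
    (x : ℝ) {t : ℝ} (ht : 0 ≤ t) : (1 - G (x + t)) / (1 - G x) ∈ Icc (0 : ℝ) 1 :=
  ⟨div_nonneg (sub_nonneg.2 (hG1 _)) (sub_nonneg.2 (hG1 _)),
    div_le_one_of_le₀ (by linarith [hmono (le_add_of_nonneg_right ht : x ≤ x + t)])
      (sub_nonneg.2 (hG1 _))⟩

theorem tendsto_survival_ratio_atTop {G : ℝ → ℝ} (hlim : Tendsto G atTop (𝓝 1)) (x : ℝ) :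
    Tendsto (fun t => (1 - G (x + t)) / (1 - G x)) atTop (𝓝 0) := by
  have hG := hlim.comp (tendsto_atTop_add_const_left atTop x tendsto_id)
  simpa using ((tendsto_const_nhds (x := (1 : ℝ))).sub hG).div_const (1 - G x)

theorem tendsto_integral_mul_survival_ratio_atTop {μ : Measure ℝ} [IsFiniteMeasure μ]
    {G f : ℝ → ℝ} (hmono : Monotone G) (hG1 : ∀ x, G x ≤ 1) (hlim : Tendsto G atTop (𝓝 1))
    (hf : Measurable f) {M : ℝ} (hM : ∀ x, |f x| ≤ M) :
    Tendsto (fun t => ∫ x, f (x + t) * ((1 - G (x + t)) / (1 - G x)) ∂μ) atTop (𝓝 0) := by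
  have hG := hmono.measurable
  have hmeas : ∀ t, AEStronglyMeasurable
      (fun x => f (x + t) * ((1 - G (x + t)) / (1 - G x))) μ := fun t =>
    ((hf.comp (measurable_add_const t)).mul ((measurable_const.sub
      (hG.comp (measurable_add_const t))).div (measurable_const.sub hG))).aestronglyMeasurable
  have hbound : ∀ᶠ t in atTop, ∀ᵐ x ∂μ,
      ‖f (x + t) * ((1 - G (x + t)) / (1 - G x))‖ ≤ M := by
    filter_upwards [eventually_ge_atTop 0] with t ht
    refine ae_of_all _ fun x => ?_
    obtain ⟨hr0, hr1⟩ := survival_ratio_mem_Icc hmono hG1 x ht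
    rw [Real.norm_eq_abs, abs_mul, abs_of_nonneg hr0]
    simpa using mul_le_mul (hM _) hr1 hr0 ((abs_nonneg _).trans (hM 0))
  have hpointwise : ∀ x, Tendsto (fun t => f (x + t) * ((1 - G (x + t)) / (1 - G x)))
      atTop (𝓝 0) := fun x =>
    isBoundedUnder_le_mul_tendsto_zero (isBoundedUnder_of ⟨M, fun t => hM (x + t)⟩)
      (tendsto_survival_ratio_atTop hlim x)
  simpa using tendsto_integral_filter_of_dominated_convergence (fun _ => M)
    (Eventually.of_forall hmeas) hbound (integrable_const M) (ae_of_all _ hpointwise)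

theorem integral_withDensity_ofReal {α : Type*} [MeasurableSpace α] {μ : Measure α}
    {h : α → ℝ} (hh : Measurable h) (hnn : 0 ≤ᵐ[μ] h) (g : α → ℝ) :
    ∫ x, g x ∂μ.withDensity (fun x => ENNReal.ofReal (h x)) = ∫ x, h x * g x ∂μ := by
  rw [integral_withDensity_eq_integral_toReal_smul hh.ennreal_ofReal
    (ae_of_all _ fun _ => ENNReal.ofReal_lt_top)]
  refine integral_congr_ae ?_
  filter_upwards [hnn] with x hx
  rw [ENNReal.toReal_ofReal hx, smul_eq_mul]

theorem integral_eq_of_survival_invariance {G : ℝ → ℝ} {κ : ℝ} {μ : Measure ℝ}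
    [IsFiniteMeasure μ] (hmono : Monotone G) (hG1 : ∀ x, G x ≤ 1)
    (hmean : IntegrableOn (fun x => 1 - G x) (Ioi 0)) (f : ℝ →ᵇ ℝ)
    (hinv : ∀ t : ℝ, 0 ≤ t → ∫ x, f x ∂μ
      = (∫ x, f (x + t) * ((1 - G (x + t)) / (1 - G x)) ∂μ)
        + κ * ∫ s in (0 : ℝ)..t, f s * (1 - G s)) :
    ∫ x, f x ∂μ = κ * ∫ x in Ioi (0 : ℝ), f x * (1 - G x) := by
  have hlim : Tendsto G atTop (𝓝 1) := by
    have := tendsto_atTop_zero_of_antitone_of_integrableOn_Ioi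
      (fun x y hxy => sub_le_sub_left (hmono hxy) 1) (fun x => sub_nonneg.2 (hG1 x)) hmean
    simpa using (tendsto_const_nhds (x := (1 : ℝ))).sub this
  have hfM : ∀ x, |f x| ≤ ‖f‖ := fun x => Real.norm_eq_abs (f x) ▸ f.norm_coe_le_norm x
  have hshift := tendsto_integral_mul_survival_ratio_atTop (μ := μ) hmono hG1 hlim
    f.continuous.measurable hfM
  have hcumul : Tendsto (fun t => κ * ∫ s in (0 : ℝ)..t, f s * (1 - G s)) atTop
      (𝓝 (κ * ∫ x in Ioi (0 : ℝ), f x * (1 - G x))) :=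
    (intervalIntegral_tendsto_integral_Ioi 0 (hmean.bdd_mul f.continuous.aestronglyMeasurable
      (ae_of_all _ hfM)) tendsto_id).const_mul κ
  refine tendsto_nhds_unique (tendsto_const_nhds.congr' ?_) (by simpa using hshift.add hcumul)
  filter_upwards [eventually_ge_atTop 0] with t ht using hinv t ht

theorem stmt10_general (G : ℝ → ℝ) (κ : ℝ) (μ : Measure ℝ) [IsFiniteMeasure μ]
    (hκ : 0 ≤ κ)
    (hGmono : Monotone G)
    (hG1 : ∀ x, G x ≤ 1)
    (hmean : IntegrableOn (fun x => 1 - G x) (Ioi 0))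
    (hinv : ∀ f : ℝ → ℝ, Continuous f → (∃ M, ∀ x, |f x| ≤ M) → ∀ t : ℝ, 0 ≤ t →
      (∫ x, f x ∂μ)
        = (∫ x, f (x + t) * ((1 - G (x + t)) / (1 - G x)) ∂μ)
          + κ * ∫ s in (0:ℝ)..t, f s * (1 - G s)) :
    μ = (volume.restrict (Ioi 0)).withDensity
      (fun x => ENNReal.ofReal (κ * (1 - G x))) := by
  have hdensity_nonneg : ∀ x, 0 ≤ κ * (1 - G x) := fun x => mul_nonneg hκ (sub_nonneg.2 (hG1 x))
  have := isFiniteMeasure_withDensity_ofReal (hmean.const_mul κ).2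
  refine ext_of_forall_integral_eq_of_IsFiniteMeasure fun f => ?_
  have hfM : ∃ M, ∀ x, |f x| ≤ M := ⟨‖f‖, fun x => Real.norm_eq_abs (f x) ▸ f.norm_coe_le_norm x⟩
  have hdensity_meas : Measurable fun x => κ * (1 - G x) :=
    measurable_const.mul (measurable_const.sub hGmono.measurable)
  rw [integral_withDensity_ofReal hdensity_meas (ae_of_all _ hdensity_nonneg),
    integral_eq_of_survival_invariance hGmono hG1 hmean f (hinv f f.continuous hfM),
    ← integral_const_mul]
  refine setIntegral_congr_fun measurableSet_Ioi fun x _ => ?_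
  ring

/-- Let `G` be a CDF on `[0,∞)` with density and finite mean, `H = sup{x : G(x) < 1}`, and
let `μ` be a finite measure on `[0,H)` such that for every bounded continuous `f` and `t ≥ 0`
`∫ f dμ = ∫ f(x+t) (1-G(x+t))/(1-G(x)) μ(dx) + κ ∫_0^t f(s)(1-G(s)) ds` for some constant
`κ ≥ 0`.  Then `μ(dx) = κ (1 - G(x)) dx`. -/
theorem stmt10 (G g : ℝ → ℝ) (κ : ℝ) (μ : Measure ℝ) [IsFiniteMeasure μ]
    (hκ : 0 ≤ κ)
    (hGcont : Continuous G) (hGmono : Monotone G)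
    (hG0 : G 0 = 0) (hG1 : ∀ x, G x ≤ 1)
    (hgnn : ∀ x, 0 ≤ g x)
    (hdens : ∀ x, G x = ∫ y in (0:ℝ)..x, g y)
    (hmean : IntegrableOn (fun x => 1 - G x) (Ioi 0))
    (hsupp0 : μ (Iio 0) = 0) (hsuppH : μ {x : ℝ | 1 ≤ G x} = 0)
    (hinv : ∀ f : ℝ → ℝ, Continuous f → (∃ M, ∀ x, |f x| ≤ M) → ∀ t : ℝ, 0 ≤ t →
      (∫ x, f x ∂μ)
        = (∫ x, f (x + t) * ((1 - G (x + t)) / (1 - G x)) ∂μ)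
          + κ * ∫ s in (0:ℝ)..t, f s * (1 - G s)) :
    μ = (volume.restrict (Ioi 0)).withDensity
      (fun x => ENNReal.ofReal (κ * (1 - G x))) :=
  stmt10_general G κ μ hκ hGmono hG1 hmean hinv
end
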